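/- arXiv:2410.15612 — 8 statements merged into one kernel-verified Lean document; each statement's English description precedes it below -/
import Mathlib

section
/- Let S and A be measurable spaces, ν a nonzero finite measure on A, r : S × A → ℝ a bounded measurable function, P a Markov kernel from S × A to S, and γ ∈ [0,1). For a bounded measurable function V : S → ℝ define the soft Bellman V-operator (T_r V)(s) = log ∫_A exp( r(s,a) + γ ∫_S V(s') P(ds' | (s,a)) ) ν(da). Then for all bounded measurable V₁, V₂ : S → ℝ and all s ∈ S, |T_r V₁(s) − T_r V₂(s)| ≤ γ · sup_{s'∈S} |V₁(s') − V₂(s')|; that is, T_r is a γ-contraction in the sup metric. -/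
open MeasureTheory ProbabilityTheory

private lemma soft_bellman_aux
    {S A : Type*} [MeasurableSpace S] [MeasurableSpace A]
    (ν : Measure A) [IsFiniteMeasure ν] (hν : ν ≠ 0)
    (r : S × A → ℝ) (hrm : Measurable r) (Cr : ℝ) (hrb : ∀ p, |r p| ≤ Cr)
    (P : Kernel (S × A) S) [IsMarkovKernel P]
    (γ : ℝ) (hγ0 : 0 ≤ γ)
    (W₁ W₂ : S → ℝ) (hW₁m : Measurable W₁) (hW₂m : Measurable W₂)
    (C₁ C₂ : ℝ) (hW₁b : ∀ s, |W₁ s| ≤ C₁) (hW₂b : ∀ s, |W₂ s| ≤ C₂)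
    (Δ : ℝ) (hΔ : ∀ t, W₁ t - W₂ t ≤ Δ) (s : S) :
    Real.log (∫ a, Real.exp (r (s, a) + γ * ∫ s', W₁ s' ∂(P (s, a))) ∂ν) -
      Real.log (∫ a, Real.exp (r (s, a) + γ * ∫ s', W₂ s' ∂(P (s, a))) ∂ν) ≤ γ * Δ := by
  set f₁ : A → ℝ := fun a => Real.exp (r (s, a) + γ * ∫ s', W₁ s' ∂(P (s, a))) with hf₁
  set f₂ : A → ℝ := fun a => Real.exp (r (s, a) + γ * ∫ s', W₂ s' ∂(P (s, a))) with hf₂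
  set η : Kernel A S := P.comap (fun a => (s, a)) measurable_prodMk_left with hη
  have hηa : ∀ a, η a = P (s, a) := fun a => Kernel.comap_apply _ _ a
  have hmeasI : ∀ (W : S → ℝ), Measurable W →
      Measurable fun a => ∫ s', W s' ∂(P (s, a)) := by
    intro W hW
    have : StronglyMeasurable fun a => ∫ s', W s' ∂(η a) :=
      StronglyMeasurable.integral_kernel_prod_right
        (f := fun (_ : A) (s' : S) => W s')
        (hW.comp measurable_snd).stronglyMeasurable
    simpa [hηa] using this.measurable
  have hm₁ : Measurable f₁ :=
    (((hrm.comp (measurable_prodMk_left)).add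
      ((hmeasI W₁ hW₁m).const_mul γ)).exp)
  have hm₂ : Measurable f₂ :=
    (((hrm.comp (measurable_prodMk_left)).add
      ((hmeasI W₂ hW₂m).const_mul γ)).exp)
  -- bounds on the integrals over P
  have hIbound : ∀ (W : S → ℝ) (C : ℝ), (∀ t, |W t| ≤ C) → Measurable W →
      ∀ a, |∫ s', W s' ∂(P (s, a))| ≤ C := by
    intro W C hWb hWm a
    calc |∫ s', W s' ∂(P (s, a))| ≤ ∫ s', |W s'| ∂(P (s, a)) := by
          simpa [Real.norm_eq_abs] using
            norm_integral_le_integral_norm (μ := P (s, a)) W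
    _ ≤ ∫ _s', C ∂(P (s, a)) := by
        apply integral_mono
        · exact Integrable.mono' (integrable_const C) hWm.abs.aestronglyMeasurable
            (Filter.Eventually.of_forall fun t => by
              simpa [Real.norm_eq_abs, abs_abs] using hWb t)
        · exact integrable_const C
        · exact fun t => hWb t
    _ = C := by simp
  have hbd : ∀ (W : S → ℝ) (C : ℝ), (∀ p, |W p| ≤ C) → Measurable W →
      ∀ a, ‖Real.exp (r (s, a) + γ * ∫ s', W s' ∂(P (s, a)))‖ ≤ Real.exp (Cr + γ * C) := by
    intro W C hWb hWm a
    rw [Real.norm_eq_abs, abs_of_pos (Real.exp_pos _)]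
    apply Real.exp_le_exp.mpr
    have h1 : r (s, a) ≤ Cr := le_trans (le_abs_self _) (hrb _)
    have h2 : γ * ∫ s', W s' ∂(P (s, a)) ≤ γ * C :=
      mul_le_mul_of_nonneg_left (le_trans (le_abs_self _) (hIbound W C hWb hWm a)) hγ0
    linarith
  have hint₁ : Integrable f₁ ν :=
    Integrable.mono' (integrable_const _) hm₁.aestronglyMeasurable
      (Filter.Eventually.of_forall (hbd W₁ C₁ hW₁b hW₁m))
  have hint₂ : Integrable f₂ ν :=
    Integrable.mono' (integrable_const _) hm₂.aestronglyMeasurable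
      (Filter.Eventually.of_forall (hbd W₂ C₂ hW₂b hW₂m))
  -- pointwise comparison
  have hpt : ∀ a, f₁ a ≤ Real.exp (γ * Δ) * f₂ a := by
    intro a
    have hintW₁ : Integrable W₁ (P (s, a)) :=
      Integrable.mono' (integrable_const C₁) hW₁m.aestronglyMeasurable
        (Filter.Eventually.of_forall fun t => by simpa [Real.norm_eq_abs] using hW₁b t)
    have hintW₂ : Integrable W₂ (P (s, a)) :=
      Integrable.mono' (integrable_const C₂) hW₂m.aestronglyMeasurable
        (Filter.Eventually.of_forall fun t => by simpa [Real.norm_eq_abs] using hW₂b t)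
    have hdiff : (∫ s', W₁ s' ∂(P (s, a))) - (∫ s', W₂ s' ∂(P (s, a))) ≤ Δ := by
      rw [← integral_sub hintW₁ hintW₂]
      calc (∫ s', W₁ s' - W₂ s' ∂(P (s, a))) ≤ ∫ _s', Δ ∂(P (s, a)) :=
            integral_mono (hintW₁.sub hintW₂) (integrable_const Δ) (fun t => hΔ t)
      _ = Δ := by simp
    rw [hf₁, hf₂, ← Real.exp_add]
    apply Real.exp_le_exp.mpr
    nlinarith [mul_le_mul_of_nonneg_left hdiff hγ0]
  -- positivity of integrals
  have hpos : ∀ (g : A → ℝ), (∀ a, 0 < g a) → Integrable g ν → 0 < ∫ a, g a ∂ν := by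
    intro g hg hgint
    rw [integral_pos_iff_support_of_nonneg (fun a => (hg a).le) hgint]
    have : Function.support g = Set.univ := Set.eq_univ_of_forall fun a => (hg a).ne'
    rw [this]
    exact Measure.measure_univ_pos.mpr hν
  have hpos₁ : 0 < ∫ a, f₁ a ∂ν := hpos f₁ (fun a => Real.exp_pos _) hint₁
  have hpos₂ : 0 < ∫ a, f₂ a ∂ν := hpos f₂ (fun a => Real.exp_pos _) hint₂
  have hle : (∫ a, f₁ a ∂ν) ≤ Real.exp (γ * Δ) * ∫ a, f₂ a ∂ν := by
    rw [← integral_const_mul]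
    exact integral_mono hint₁ (hint₂.const_mul _) hpt
  have := Real.log_le_log hpos₁ hle
  rw [Real.log_mul (Real.exp_ne_zero _) hpos₂.ne', Real.log_exp] at this
  linarith

/-- Claim A.3 (V-version): the soft Bellman V-operator
`(T_r V)(s) = log ∫_A exp( r(s,a) + γ ∫_S V(s') P(ds'|(s,a)) ) ν(da)`
is a `γ`-contraction in the sup metric on bounded measurable functions. -/
theorem soft_bellman_V_operator_contraction
    {S A : Type*} [MeasurableSpace S] [MeasurableSpace A]
    (ν : Measure A) [IsFiniteMeasure ν] (hν : ν ≠ 0)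
    (r : S × A → ℝ) (hrm : Measurable r) (Cr : ℝ) (hrb : ∀ p, |r p| ≤ Cr)
    (P : Kernel (S × A) S) [IsMarkovKernel P]
    (γ : ℝ) (hγ0 : 0 ≤ γ) (hγ1 : γ < 1)
    (V₁ V₂ : S → ℝ) (hV₁m : Measurable V₁) (hV₂m : Measurable V₂)
    (C₁ C₂ : ℝ) (hV₁b : ∀ s, |V₁ s| ≤ C₁) (hV₂b : ∀ s, |V₂ s| ≤ C₂) :
    ∀ s : S,
      |Real.log (∫ a, Real.exp (r (s, a) + γ * ∫ s', V₁ s' ∂(P (s, a))) ∂ν) -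
          Real.log (∫ a, Real.exp (r (s, a) + γ * ∫ s', V₂ s' ∂(P (s, a))) ∂ν)| ≤
        γ * ⨆ s' : S, |V₁ s' - V₂ s'| := by
  intro s
  set Δ := ⨆ s' : S, |V₁ s' - V₂ s'| with hΔdef
  have hbdd : BddAbove (Set.range fun s' => |V₁ s' - V₂ s'|) := by
    refine ⟨C₁ + C₂, ?_⟩
    rintro x ⟨t, rfl⟩
    calc |V₁ t - V₂ t| ≤ |V₁ t| + |V₂ t| := abs_sub _ _
    _ ≤ C₁ + C₂ := add_le_add (hV₁b t) (hV₂b t)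
  have hΔ : ∀ t, |V₁ t - V₂ t| ≤ Δ := fun t => le_ciSup hbdd t
  rw [abs_sub_le_iff]
  constructor
  · exact soft_bellman_aux ν hν r hrm Cr hrb P γ hγ0 V₁ V₂ hV₁m hV₂m C₁ C₂ hV₁b hV₂b Δ
      (fun t => le_trans (le_abs_self _) (hΔ t)) s
  · exact soft_bellman_aux ν hν r hrm Cr hrb P γ hγ0 V₂ V₁ hV₂m hV₁m C₂ C₁ hV₂b hV₁b Δ
      (fun t => le_trans (le_abs_self _) (by rw [abs_sub_comm]; exact hΔ t)) s
end

section
/- Let S and A be measurable spaces, ν a nonzero finite measure on A, r : S × A → ℝ a bounded measurable function, P a Markov kernel from S × A to S, and γ ∈ [0,1). For a bounded measurable function Q : S × A → ℝ define the soft Bellman Q-operator (T_r Q)(s,a) = r(s,a) + γ ∫_S log( ∫_A exp(Q(s',a')) ν(da') ) P(ds' | (s,a)). Then for all bounded measurable Q₁, Q₂ : S × A → ℝ and all (s,a), |T_r Q₁(s,a) − T_r Q₂(s,a)| ≤ γ · sup_{(s',a')} |Q₁(s',a') − Q₂(s',a')|; that is, T_r is a γ-contraction in the sup metric. -/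
/-!
For fixed `s'`, the map `Q ↦ log ∫ exp (Q (s', ·)) dν` is monotone and commutes with adding
constants, hence is `1`-Lipschitz for the sup norm. Integrating this bound against the
probability measure `P (s, a)` and multiplying by `γ` gives the contraction.
-/

open MeasureTheory ProbabilityTheory

noncomputable def logIntegralExp {α : Type*} [MeasurableSpace α] (ν : Measure α) (f : α → ℝ) : ℝ :=
  Real.log (∫ a, Real.exp (f a) ∂ν)

section LogIntegralExp

variable {α : Type*} [MeasurableSpace α] {ν : Measure α} {f g : α → ℝ}

lemma integrable_exp_of_le [IsFiniteMeasure ν] (hf : AEStronglyMeasurable f ν) {C : ℝ}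
    (hC : ∀ a, f a ≤ C) : Integrable (fun a => Real.exp (f a)) ν :=
  .of_bound (Real.continuous_exp.comp_aestronglyMeasurable hf) (Real.exp C) <|
    ae_of_all _ fun a => by
      rw [Real.norm_eq_abs, Real.abs_exp]
      exact Real.exp_le_exp.mpr (hC a)

lemma logIntegralExp_le_add [NeZero ν] (hf : Integrable (fun a => Real.exp (f a)) ν)
    (hg : Integrable (fun a => Real.exp (g a)) ν) {M : ℝ} (h : ∀ᵐ a ∂ν, f a ≤ g a + M) :
    logIntegralExp ν f ≤ logIntegralExp ν g + M := by
  have hle : ∫ a, Real.exp (f a) ∂ν ≤ Real.exp M * ∫ a, Real.exp (g a) ∂ν := by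
    rw [← integral_const_mul]
    refine integral_mono_ae hf (hg.const_mul _) ?_
    filter_upwards [h] with a ha
    rw [← Real.exp_add, add_comm]
    exact Real.exp_le_exp.mpr ha
  calc logIntegralExp ν f ≤ Real.log (Real.exp M * ∫ a, Real.exp (g a) ∂ν) :=
        Real.log_le_log (integral_exp_pos hf) hle
    _ = logIntegralExp ν g + M := by
        rw [Real.log_mul (Real.exp_ne_zero _) (integral_exp_pos hg).ne', Real.log_exp, add_comm,
          logIntegralExp]

lemma abs_logIntegralExp_sub_le [NeZero ν] (hf : Integrable (fun a => Real.exp (f a)) ν)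
    (hg : Integrable (fun a => Real.exp (g a)) ν) {M : ℝ} (h : ∀ᵐ a ∂ν, |f a - g a| ≤ M) :
    |logIntegralExp ν f - logIntegralExp ν g| ≤ M := by
  have hfg := logIntegralExp_le_add hf hg (M := M) <| h.mono fun a ha => by
    linarith [(abs_le.mp ha).2]
  have hgf := logIntegralExp_le_add hg hf (M := M) <| h.mono fun a ha => by
    linarith [(abs_le.mp ha).1]
  exact abs_sub_le_iff.mpr ⟨by linarith, by linarith⟩

lemma abs_logIntegralExp_le [IsFiniteMeasure ν] [NeZero ν]
    (hf : Integrable (fun a => Real.exp (f a)) ν) {C : ℝ} (hC : ∀ᵐ a ∂ν, |f a| ≤ C) :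
    |logIntegralExp ν f| ≤ |Real.log (ν.real Set.univ)| + C := by
  have hzero : logIntegralExp ν (fun _ => 0) = Real.log (ν.real Set.univ) := by
    simp [logIntegralExp]
  have hdist := abs_logIntegralExp_sub_le hf (integrable_const (Real.exp 0)) (g := fun _ => 0)
    (hC.mono fun a ha => by rwa [sub_zero])
  rw [hzero] at hdist
  linarith [abs_sub_abs_le_abs_sub (logIntegralExp ν f) (Real.log (ν.real Set.univ))]

end LogIntegralExp

lemma abs_integral_sub_integral_le {α : Type*} [MeasurableSpace α] {μ : Measure α}
    [IsProbabilityMeasure μ] {f g : α → ℝ} (hf : Integrable f μ) (hg : Integrable g μ) {M : ℝ}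
    (h : ∀ᵐ x ∂μ, |f x - g x| ≤ M) : |∫ x, f x ∂μ - ∫ x, g x ∂μ| ≤ M := by
  rw [← integral_sub hf hg]
  simpa using norm_integral_le_of_norm_le_const (f := fun x => f x - g x) (C := M) h

section Curry

variable {S A : Type*} [MeasurableSpace S] [MeasurableSpace A] (ν : Measure A)
  [IsFiniteMeasure ν] {Q : S × A → ℝ}

lemma measurable_logIntegralExp_curry (hQ : Measurable Q) :
    Measurable fun s => logIntegralExp ν fun a => Q (s, a) :=
  (hQ.exp.stronglyMeasurable.integral_prod_right').measurable.log

lemma integrable_exp_curry (hQ : Measurable Q) {C : ℝ} (hC : ∀ p, |Q p| ≤ C) (s : S) :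
    Integrable (fun a => Real.exp (Q (s, a))) ν :=
  integrable_exp_of_le (hQ.comp measurable_prodMk_left).aestronglyMeasurable
    fun a => (le_abs_self _).trans (hC (s, a))

lemma integrable_logIntegralExp_curry [NeZero ν] (μ : Measure S) [IsFiniteMeasure μ]
    (hQ : Measurable Q) {C : ℝ} (hC : ∀ p, |Q p| ≤ C) :
    Integrable (fun s => logIntegralExp ν fun a => Q (s, a)) μ :=
  .of_bound (measurable_logIntegralExp_curry ν hQ).aestronglyMeasurable
    (|Real.log (ν.real Set.univ)| + C) <| ae_of_all _ fun s =>
      abs_logIntegralExp_le (integrable_exp_curry ν hQ hC s) (ae_of_all _ fun a => hC (s, a))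

end Curry

theorem soft_bellman_Q_operator_contraction_general
    {S A : Type*} [MeasurableSpace S] [MeasurableSpace A]
    (ν : Measure A) [IsFiniteMeasure ν] (hν : ν ≠ 0)
    (r : S × A → ℝ)
    (P : Kernel (S × A) S) [IsMarkovKernel P]
    (γ : ℝ) (hγ0 : 0 ≤ γ)
    (Q₁ Q₂ : S × A → ℝ) (hQ₁m : Measurable Q₁) (hQ₂m : Measurable Q₂)
    (C₁ C₂ : ℝ) (hQ₁b : ∀ p, |Q₁ p| ≤ C₁) (hQ₂b : ∀ p, |Q₂ p| ≤ C₂) :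
    ∀ s : S, ∀ a : A,
      |(r (s, a) + γ * ∫ s', Real.log (∫ a', Real.exp (Q₁ (s', a')) ∂ν) ∂(P (s, a))) -
          (r (s, a) + γ * ∫ s', Real.log (∫ a', Real.exp (Q₂ (s', a')) ∂ν) ∂(P (s, a)))| ≤
        γ * ⨆ p : S × A, |Q₁ p - Q₂ p| := by
  intro s a
  have : NeZero ν := ⟨hν⟩
  have hbdd : BddAbove (Set.range fun p => |Q₁ p - Q₂ p|) :=
    ⟨C₁ + C₂, by
      rintro _ ⟨p, rfl⟩
      exact (abs_sub _ _).trans (add_le_add (hQ₁b p) (hQ₂b p))⟩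
  have hdist (s' : S) :
      |(logIntegralExp ν fun a' => Q₁ (s', a')) - logIntegralExp ν fun a' => Q₂ (s', a')| ≤
        ⨆ p, |Q₁ p - Q₂ p| :=
    abs_logIntegralExp_sub_le (integrable_exp_curry ν hQ₁m hQ₁b s')
      (integrable_exp_curry ν hQ₂m hQ₂b s') (ae_of_all _ fun a' => le_ciSup hbdd (s', a'))
  rw [add_sub_add_left_eq_sub, ← mul_sub, abs_mul, abs_of_nonneg hγ0]
  exact mul_le_mul_of_nonneg_left (abs_integral_sub_integral_le
    (integrable_logIntegralExp_curry ν _ hQ₁m hQ₁b) (integrable_logIntegralExp_curry ν _ hQ₂m hQ₂b)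
    (ae_of_all _ hdist)) hγ0

/-- Claim A.3 (Q-version): the soft Bellman Q-operator
`(T_r Q)(s,a) = r(s,a) + γ ∫_S log( ∫_A exp(Q(s',a')) ν(da') ) P(ds'|(s,a))`
is a `γ`-contraction in the sup metric on bounded measurable functions. -/
theorem soft_bellman_Q_operator_contraction
    {S A : Type*} [MeasurableSpace S] [MeasurableSpace A]
    (ν : Measure A) [IsFiniteMeasure ν] (hν : ν ≠ 0)
    (r : S × A → ℝ) (hrm : Measurable r) (Cr : ℝ) (hrb : ∀ p, |r p| ≤ Cr)
    (P : Kernel (S × A) S) [IsMarkovKernel P]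
    (γ : ℝ) (hγ0 : 0 ≤ γ) (hγ1 : γ < 1)
    (Q₁ Q₂ : S × A → ℝ) (hQ₁m : Measurable Q₁) (hQ₂m : Measurable Q₂)
    (C₁ C₂ : ℝ) (hQ₁b : ∀ p, |Q₁ p| ≤ C₁) (hQ₂b : ∀ p, |Q₂ p| ≤ C₂) :
    ∀ s : S, ∀ a : A,
      |(r (s, a) + γ * ∫ s', Real.log (∫ a', Real.exp (Q₁ (s', a')) ∂ν) ∂(P (s, a))) -
          (r (s, a) + γ * ∫ s', Real.log (∫ a', Real.exp (Q₂ (s', a')) ∂ν) ∂(P (s, a)))| ≤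
        γ * ⨆ p : S × A, |Q₁ p - Q₂ p| :=
  soft_bellman_Q_operator_contraction_general ν hν r P γ hγ0 Q₁ Q₂ hQ₁m hQ₂m C₁ C₂ hQ₁b hQ₂b
end

section
/- Let S and A be measurable spaces, ν a nonzero finite measure on A, P a Markov kernel from S × A to S, and γ ∈ [0,1). For a bounded measurable reward r : S × A → ℝ let T_r denote the soft Bellman V-operator (T_r V)(s) = log ∫_A exp( r(s,a) + γ ∫_S V(s') P(ds' | (s,a)) ) ν(da). Let r₁, r₂ be bounded measurable rewards and let V₁, V₂ be bounded measurable functions on S with T_{r₁} V₁ = V₁ and T_{r₂} V₂ = V₂. Then sup_{s∈S} |V₁(s) − V₂(s)| ≤ (1/(1−γ)) · sup_{(s,a)∈S×A} |r₁(s,a) − r₂(s,a)|. -/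
open MeasureTheory ProbabilityTheory

/-!
The soft Bellman operator is a log-integral-exp of the soft Q-function
`r(s,a) + γ E[V(s')]`, and `f ↦ log ∫ exp f` is monotone and commutes with adding constants.
Hence if `r₁ ≤ r₂ + R` and `V₁ ≤ V₂ + M`, then `T_{r₁} V₁ ≤ T_{r₂} V₂ + R + γ M`.
Applied to the fixed points with `R = sup |r₁ - r₂|` and `M = sup |V₁ - V₂|` (both finite by
boundedness) this gives `M ≤ R + γ M`, i.e. `M ≤ R / (1 - γ)`.
-/

section LogIntegralExp

variable {α : Type*} [MeasurableSpace α] {μ : Measure α} {f g : α → ℝ} {c : ℝ}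

lemma integrable_exp_of_le_s4 [IsFiniteMeasure μ] (hf : Measurable f) (hfc : ∀ x, f x ≤ c) :
    Integrable (fun x ↦ Real.exp (f x)) μ :=
  Integrable.of_bound hf.exp.aestronglyMeasurable (Real.exp c) <| ae_of_all _ fun x ↦ by
    rw [Real.norm_of_nonneg (Real.exp_pos _).le]
    exact Real.exp_le_exp.2 (hfc x)

lemma log_integral_exp_le_add [NeZero μ] (hf : Integrable (fun x ↦ Real.exp (f x)) μ)
    (hg : Integrable (fun x ↦ Real.exp (g x)) μ) (hfg : ∀ x, f x ≤ g x + c) :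
    Real.log (∫ x, Real.exp (f x) ∂μ) ≤ Real.log (∫ x, Real.exp (g x) ∂μ) + c := by
  have hmono : ∫ x, Real.exp (f x) ∂μ ≤ (∫ x, Real.exp (g x) ∂μ) * Real.exp c := by
    rw [← integral_mul_const]
    refine integral_mono hf (hg.mul_const _) fun x ↦ ?_
    simpa only [← Real.exp_add] using Real.exp_le_exp.2 (hfg x)
  calc Real.log (∫ x, Real.exp (f x) ∂μ)
      ≤ Real.log ((∫ x, Real.exp (g x) ∂μ) * Real.exp c) :=
        Real.log_le_log (integral_exp_pos hf) hmono
    _ = Real.log (∫ x, Real.exp (g x) ∂μ) + c := by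
        rw [Real.log_mul (integral_exp_pos hg).ne' (Real.exp_ne_zero c), Real.log_exp]

lemma integral_le_integral_add_of_le_add [IsProbabilityMeasure μ] (hf : Integrable f μ)
    (hg : Integrable g μ) (hfg : ∀ x, f x ≤ g x + c) :
    ∫ x, f x ∂μ ≤ (∫ x, g x ∂μ) + c :=
  calc ∫ x, f x ∂μ ≤ ∫ x, (g x + c) ∂μ := integral_mono hf (hg.add (integrable_const c)) hfg
    _ = (∫ x, g x ∂μ) + c := by simp [integral_add hg (integrable_const c)]

end LogIntegralExp

section SoftBellman

variable {S A : Type*} [MeasurableSpace S] [MeasurableSpace A] {ν : Measure A}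
  {P : Kernel (S × A) S} {γ : ℝ} {r r₁ r₂ : S × A → ℝ} {V V₁ V₂ : S → ℝ}

noncomputable def softQ (P : Kernel (S × A) S) (γ : ℝ) (r : S × A → ℝ) (V : S → ℝ)
    (p : S × A) : ℝ :=
  r p + γ * ∫ s', V s' ∂(P p)

noncomputable def softBellman (ν : Measure A) (P : Kernel (S × A) S) (γ : ℝ)
    (r : S × A → ℝ) (V : S → ℝ) (s : S) : ℝ :=
  Real.log (∫ a, Real.exp (softQ P γ r V (s, a)) ∂ν)

lemma measurable_softQ (hr : Measurable r) (hV : Measurable V) : Measurable (softQ P γ r V) :=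
  hr.add (hV.stronglyMeasurable.integral_kernel.measurable.const_mul γ)

lemma softQ_le [IsMarkovKernel P] (hγ : 0 ≤ γ) {Cr C : ℝ} (hr : ∀ p, r p ≤ Cr)
    (hV : ∀ s, |V s| ≤ C) (p : S × A) : softQ P γ r V p ≤ Cr + γ * C := by
  have hint : ∫ s', V s' ∂(P p) ≤ C := by
    have h := norm_integral_le_of_norm_le_const (μ := P p) (f := V) (ae_of_all _ hV)
    simp only [probReal_univ, mul_one, Real.norm_eq_abs] at h
    exact (le_abs_self _).trans h
  exact add_le_add (hr p) (mul_le_mul_of_nonneg_left hint hγ)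

lemma softQ_le_softQ_add [IsMarkovKernel P] (hγ : 0 ≤ γ) {R M C₁ C₂ : ℝ}
    (hV₁ : Measurable V₁) (hV₁b : ∀ s, |V₁ s| ≤ C₁) (hV₂ : Measurable V₂)
    (hV₂b : ∀ s, |V₂ s| ≤ C₂) (hr : ∀ p, r₁ p ≤ r₂ p + R) (hV : ∀ s, V₁ s ≤ V₂ s + M)
    (p : S × A) : softQ P γ r₁ V₁ p ≤ softQ P γ r₂ V₂ p + (R + γ * M) := by
  have hint := integral_le_integral_add_of_le_add (μ := P p)
    (Integrable.of_bound hV₁.aestronglyMeasurable C₁ (ae_of_all _ hV₁b))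
    (Integrable.of_bound hV₂.aestronglyMeasurable C₂ (ae_of_all _ hV₂b)) hV
  unfold softQ
  linarith [hr p, mul_le_mul_of_nonneg_left hint hγ]

lemma softBellman_le_add [IsFiniteMeasure ν] [NeZero ν] [IsMarkovKernel P] (hγ : 0 ≤ γ)
    {Cr₁ Cr₂ C₁ C₂ R M : ℝ}
    (hr₁ : Measurable r₁) (hr₁b : ∀ p, r₁ p ≤ Cr₁) (hr₂ : Measurable r₂) (hr₂b : ∀ p, r₂ p ≤ Cr₂)
    (hV₁ : Measurable V₁) (hV₁b : ∀ s, |V₁ s| ≤ C₁) (hV₂ : Measurable V₂)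
    (hV₂b : ∀ s, |V₂ s| ≤ C₂) (hr : ∀ p, r₁ p ≤ r₂ p + R) (hV : ∀ s, V₁ s ≤ V₂ s + M) (s : S) :
    softBellman ν P γ r₁ V₁ s ≤ softBellman ν P γ r₂ V₂ s + (R + γ * M) :=
  log_integral_exp_le_add
    (integrable_exp_of_le_s4 ((measurable_softQ hr₁ hV₁).comp measurable_prodMk_left)
      fun _ ↦ softQ_le hγ hr₁b hV₁b _)
    (integrable_exp_of_le_s4 ((measurable_softQ hr₂ hV₂).comp measurable_prodMk_left)
      fun _ ↦ softQ_le hγ hr₂b hV₂b _)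
    fun _ ↦ softQ_le_softQ_add hγ hV₁ hV₁b hV₂ hV₂b hr hV _

lemma abs_softBellman_sub_le [IsFiniteMeasure ν] [NeZero ν] [IsMarkovKernel P] (hγ : 0 ≤ γ)
    {Cr₁ Cr₂ C₁ C₂ R M : ℝ}
    (hr₁ : Measurable r₁) (hr₁b : ∀ p, |r₁ p| ≤ Cr₁) (hr₂ : Measurable r₂)
    (hr₂b : ∀ p, |r₂ p| ≤ Cr₂) (hV₁ : Measurable V₁) (hV₁b : ∀ s, |V₁ s| ≤ C₁)
    (hV₂ : Measurable V₂) (hV₂b : ∀ s, |V₂ s| ≤ C₂) (hr : ∀ p, |r₁ p - r₂ p| ≤ R)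
    (hV : ∀ s, |V₁ s - V₂ s| ≤ M) (s : S) :
    |softBellman ν P γ r₁ V₁ s - softBellman ν P γ r₂ V₂ s| ≤ R + γ * M := by
  have hr₁b' p := (le_abs_self _).trans (hr₁b p)
  have hr₂b' p := (le_abs_self _).trans (hr₂b p)
  have h₁₂ : softBellman ν P γ r₁ V₁ s ≤ softBellman ν P γ r₂ V₂ s + (R + γ * M) :=
    softBellman_le_add hγ hr₁ hr₁b' hr₂ hr₂b' hV₁ hV₁b hV₂ hV₂b
    (fun p ↦ by linarith [(abs_sub_le_iff.1 (hr p)).1])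
      (fun s ↦ by linarith [(abs_sub_le_iff.1 (hV s)).1]) s
  have h₂₁ : softBellman ν P γ r₂ V₂ s ≤ softBellman ν P γ r₁ V₁ s + (R + γ * M) :=
    softBellman_le_add hγ hr₂ hr₂b' hr₁ hr₁b' hV₂ hV₂b hV₁ hV₁b
    (fun p ↦ by linarith [(abs_sub_le_iff.1 (hr p)).2])
      (fun s ↦ by linarith [(abs_sub_le_iff.1 (hV s)).2]) s
  exact abs_sub_le_iff.2 ⟨by linarith, by linarith⟩

end SoftBellman

lemma bddAbove_range_abs_sub {ι : Type*} {f g : ι → ℝ} {C D : ℝ} (hf : ∀ i, |f i| ≤ C)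
    (hg : ∀ i, |g i| ≤ D) : BddAbove (Set.range fun i ↦ |f i - g i|) :=
  ⟨C + D, Set.forall_mem_range.2 fun i ↦ (abs_sub _ _).trans (add_le_add (hf i) (hg i))⟩

/-- Claim A.5: Lipschitz continuity of the optimal soft value function in the reward.
If `V₁, V₂` are bounded measurable fixed points of the soft Bellman V-operators with
rewards `r₁, r₂` respectively, then
`sup_s |V₁(s) − V₂(s)| ≤ (1/(1−γ)) · sup_{(s,a)} |r₁(s,a) − r₂(s,a)|`. -/
theorem soft_value_lipschitz_in_reward
    {S A : Type*} [MeasurableSpace S] [MeasurableSpace A]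
    (ν : Measure A) [IsFiniteMeasure ν] (hν : ν ≠ 0)
    (P : Kernel (S × A) S) [IsMarkovKernel P]
    (γ : ℝ) (hγ0 : 0 ≤ γ) (hγ1 : γ < 1)
    (r₁ r₂ : S × A → ℝ) (hr₁m : Measurable r₁) (hr₂m : Measurable r₂)
    (Cr₁ Cr₂ : ℝ) (hr₁b : ∀ p, |r₁ p| ≤ Cr₁) (hr₂b : ∀ p, |r₂ p| ≤ Cr₂)
    (V₁ V₂ : S → ℝ) (hV₁m : Measurable V₁) (hV₂m : Measurable V₂)
    (C₁ C₂ : ℝ) (hV₁b : ∀ s, |V₁ s| ≤ C₁) (hV₂b : ∀ s, |V₂ s| ≤ C₂)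
    (hfix₁ : ∀ s : S,
      Real.log (∫ a, Real.exp (r₁ (s, a) + γ * ∫ s', V₁ s' ∂(P (s, a))) ∂ν) = V₁ s)
    (hfix₂ : ∀ s : S,
      Real.log (∫ a, Real.exp (r₂ (s, a) + γ * ∫ s', V₂ s' ∂(P (s, a))) ∂ν) = V₂ s) :
    (⨆ s : S, |V₁ s - V₂ s|) ≤ (1 / (1 - γ)) * ⨆ p : S × A, |r₁ p - r₂ p| := by
  have : NeZero ν := ⟨hν⟩
  set R := ⨆ p : S × A, |r₁ p - r₂ p|
  set M := ⨆ s : S, |V₁ s - V₂ s|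
  have hR p : |r₁ p - r₂ p| ≤ R := le_ciSup (bddAbove_range_abs_sub hr₁b hr₂b) p
  have hM s : |V₁ s - V₂ s| ≤ M := le_ciSup (bddAbove_range_abs_sub hV₁b hV₂b) s
  have hcontract : M ≤ R + γ * M := by
    refine Real.iSup_le (fun s ↦ ?_) ?_
    · have h := abs_softBellman_sub_le (ν := ν) (P := P) hγ0 hr₁m hr₁b hr₂m hr₂b hV₁m hV₁b
        hV₂m hV₂b hR hM s
      unfold softBellman softQ at h
      rwa [hfix₁, hfix₂] at h
    · have hR0 : 0 ≤ R := Real.iSup_nonneg fun _ ↦ abs_nonneg _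
      have hM0 : 0 ≤ M := Real.iSup_nonneg fun _ ↦ abs_nonneg _
      positivity
  rw [one_div, inv_mul_eq_div, le_div_iff₀ (by linarith)]
  linarith
end

section
/- Let γ ∈ [0,1) and c ≥ 0, let (α_i)_{i≥0} be a nonincreasing sequence of positive reals, and let (q_i)_{i≥0} be a sequence of nonnegative reals satisfying q_i ≤ γ q_{i−1} + c α_{i−1} for every i ≥ 1. Then for every t ≥ 1, (1 − γ) Σ_{i=0}^{t−1} α_i q_i ≤ α₀ q₀ − α_t q_t + c Σ_{i=0}^{t−1} α_i². -/
/-- Weighted telescoping inequality from the proof of Lemma 3: if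
`q_i ≤ γ q_{i−1} + c α_{i−1}` for `i ≥ 1`, with `(α_i)` nonincreasing positive, then
`(1 − γ) Σ_{i<t} α_i q_i ≤ α₀ q₀ − α_t q_t + c Σ_{i<t} α_i²`. -/
theorem weighted_telescoping_contraction
    (γ c : ℝ) (hγ0 : 0 ≤ γ) (hγ1 : γ < 1) (hc : 0 ≤ c)
    (α : ℕ → ℝ) (hαpos : ∀ i, 0 < α i) (hαanti : Antitone α)
    (q : ℕ → ℝ) (hq : ∀ i, 0 ≤ q i)
    (hrec : ∀ i, q (i + 1) ≤ γ * q i + c * α i) :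
    ∀ t : ℕ, 1 ≤ t →
      (1 - γ) * ∑ i ∈ Finset.range t, α i * q i ≤
        α 0 * q 0 - α t * q t + c * ∑ i ∈ Finset.range t, (α i) ^ 2 := by
  have key : ∀ i : ℕ, (1 - γ) * (α i * q i) ≤
      α i * q i - α (i + 1) * q (i + 1) + c * (α i) ^ 2 := by
    intro i
    have h1 : α (i + 1) * q (i + 1) ≤ α (i + 1) * (γ * q i + c * α i) :=
      mul_le_mul_of_nonneg_left (hrec i) (hαpos (i + 1)).le
    have hle : α (i + 1) ≤ α i := hαanti (Nat.le_succ i)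
    have h2 : α (i + 1) * (γ * q i + c * α i) ≤ α i * (γ * q i + c * α i) := by
      apply mul_le_mul_of_nonneg_right hle
      exact add_nonneg (mul_nonneg hγ0 (hq i)) (mul_nonneg hc (hαpos i).le)
    nlinarith [h1.trans h2]
  intro t ht
  induction t with
  | zero => omega
  | succ n ih =>
    rcases Nat.eq_or_lt_of_le ht with h | h
    · simp [← h, Finset.sum_range_one]
      nlinarith [key 0]
    · have hn : 1 ≤ n := Nat.lt_succ_iff.mp h
      have := ih hn
      rw [Finset.sum_range_succ, Finset.sum_range_succ]
      nlinarith [key n]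
end

section
/- Let γ ∈ [0,1), c ≥ 0, a > 0, and set α_i = a/√(i+1) for i ≥ 0. If (q_i)_{i≥0} is a sequence of nonnegative reals satisfying q_i ≤ γ q_{i−1} + c α_{i−1} for every i ≥ 1, then for every t ≥ 1, (1/t) Σ_{i=0}^{t−1} q_i ≤ 2 c a / ((1 − γ) √t) + q₀ / ((1 − γ) t). -/
/-! Summing the recursion over `i < t` and enlarging `Σ_{i<t-1} q_i` to `Σ_{i<t} q_i` (the `q_i`
are nonnegative) gives `(1 - γ) Σ_{i<t} q_i ≤ q₀ + c a Σ_{i<t-1} 1/√(i+1)`, and that last sum is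
at most `2√t` since `1/√(i+1) ≤ 2(√(i+1) - √i)`. -/

open Finset

theorem sum_range_one_div_sqrt_succ_le (n : ℕ) :
    ∑ i ∈ range n, 1 / √((i : ℝ) + 1) ≤ 2 * √(n : ℝ) := by
  induction n with
  | zero => simp
  | succ n ih =>
    have hn : √(n : ℝ) ^ 2 = n := Real.sq_sqrt n.cast_nonneg
    have hn1 : √((n : ℝ) + 1) ^ 2 = n + 1 := Real.sq_sqrt (by positivity)
    have hpos : 0 < √((n : ℝ) + 1) := by positivity
    have step : 1 / √((n : ℝ) + 1) ≤ 2 * √((n : ℝ) + 1) - 2 * √(n : ℝ) := by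
      rw [div_le_iff₀ hpos]
      nlinarith [sq_nonneg (√(n : ℝ) - √((n : ℝ) + 1))]
    rw [sum_range_succ, Nat.cast_succ]
    linarith

theorem one_sub_mul_sum_range_succ_le {γ : ℝ} {q e : ℕ → ℝ} (hγ : 0 ≤ γ) (hq : ∀ i, 0 ≤ q i)
    (hrec : ∀ i, q (i + 1) ≤ γ * q i + e i) (n : ℕ) :
    (1 - γ) * ∑ i ∈ range (n + 1), q i ≤ q 0 + ∑ i ∈ range n, e i := by
  have hshift : ∑ i ∈ range n, q (i + 1) ≤ γ * ∑ i ∈ range n, q i + ∑ i ∈ range n, e i := by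
    rw [mul_sum, ← sum_add_distrib]
    exact sum_le_sum fun i _ => hrec i
  have hmono : γ * ∑ i ∈ range n, q i ≤ γ * ∑ i ∈ range (n + 1), q i :=
    mul_le_mul_of_nonneg_left (sum_le_sum_of_subset_of_nonneg (range_subset_range.mpr n.le_succ)
      fun i _ _ => hq i) hγ
  rw [sum_range_succ'] at hmono ⊢
  linarith

/-- `O(1/√t)` bound on the running average of a contracting-with-perturbation
sequence with step sizes `α_i = a/√(i+1)`: if `q_i ≤ γ q_{i−1} + c α_{i−1}` for
`i ≥ 1`, then `(1/t) Σ_{i<t} q_i ≤ 2ca/((1−γ)√t) + q₀/((1−γ)t)`. -/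
theorem average_contraction_sqrt_rate
    (γ c a : ℝ) (hγ0 : 0 ≤ γ) (hγ1 : γ < 1) (hc : 0 ≤ c) (ha : 0 < a)
    (q : ℕ → ℝ) (hq : ∀ i, 0 ≤ q i)
    (hrec : ∀ i : ℕ, q (i + 1) ≤ γ * q i + c * (a / Real.sqrt (i + 1))) :
    ∀ t : ℕ, 1 ≤ t →
      (1 / (t : ℝ)) * ∑ i ∈ Finset.range t, q i ≤
        2 * c * a / ((1 - γ) * Real.sqrt t) + q 0 / ((1 - γ) * t) := by
  intro t ht
  obtain ⟨n, rfl⟩ : ∃ n, t = n + 1 := ⟨t - 1, by omega⟩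
  have hγ : 0 < 1 - γ := by linarith
  have htpos : (0 : ℝ) < (n + 1 : ℕ) := by positivity
  have hsqrt : √((n + 1 : ℕ) : ℝ) * √((n + 1 : ℕ) : ℝ) = (n + 1 : ℕ) := Real.mul_self_sqrt htpos.le
  have hperturb : ∑ i ∈ range n, c * (a / √((i : ℝ) + 1)) ≤ 2 * c * a * √((n + 1 : ℕ) : ℝ) := by
    calc ∑ i ∈ range n, c * (a / √((i : ℝ) + 1))
        = c * a * ∑ i ∈ range n, 1 / √((i : ℝ) + 1) := by
          rw [mul_sum]; exact sum_congr rfl fun i _ => by ring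
      _ ≤ c * a * (2 * √(n : ℝ)) := by gcongr; exact sum_range_one_div_sqrt_succ_le n
      _ ≤ c * a * (2 * √((n + 1 : ℕ) : ℝ)) := by gcongr; simp
      _ = 2 * c * a * √((n + 1 : ℕ) : ℝ) := by ring
  have hsum := (one_sub_mul_sum_range_succ_le hγ0 hq hrec n).trans (add_le_add_right hperturb _)
  calc 1 / ((n + 1 : ℕ) : ℝ) * ∑ i ∈ range (n + 1), q i
      = (1 - γ) * (∑ i ∈ range (n + 1), q i) / ((1 - γ) * (n + 1 : ℕ)) := by field_simp
    _ ≤ (q 0 + 2 * c * a * √((n + 1 : ℕ) : ℝ)) / ((1 - γ) * (n + 1 : ℕ)) := by gcongr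
    _ = _ := by field_simp; linear_combination 2 * c * a * hsqrt
end

section
/- Let E be a real inner product space, let F : E → ℝ be differentiable with gradient ∇F that is Lipschitz with constant C ≥ 0, and let G ≥ 0, G' ≥ 0. Let (α_t)_{t≥0} be positive reals, let (g_t)_{t≥0} be vectors in E with ‖g_t‖ ≤ G for all t, and define θ_{t+1} = θ_t − α_t g_t starting from θ₀ ∈ E. If ‖∇F(θ_t)‖ ≤ G' for all t, then for every T ≥ 1: Σ_{t=0}^{T−1} α_t ‖∇F(θ_t)‖² ≤ F(θ₀) − F(θ_T) + G' Σ_{t=0}^{T−1} α_t ‖g_t − ∇F(θ_t)‖ + (C G² / 2) Σ_{t=0}^{T−1} α_t². -/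
open Finset

/-! Along the segment `s ↦ x + s • v` the slope of `F` exceeds its initial value by at most
`C s ‖v‖²`, so comparing with the parabola `F x + s ⟪F' x, v⟫ + C s² ‖v‖² / 2` gives the quadratic
upper bound (descent lemma). Applied to one step `θ_{t+1} = θ_t - α_t g_t` and after splitting
`g_t = F' θ_t + (g_t - F' θ_t)`, it bounds `α_t ‖F' θ_t‖²` by the decrease of `F`, an error term
controlled by Cauchy–Schwarz, and the curvature term; summing telescopes the decrease. -/

section LipschitzGradient

variable {E : Type*} [NormedAddCommGroup E] [InnerProductSpace ℝ E]
  {F : E → ℝ} {F' : E → E} {C : ℝ}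

theorem hasDerivAt_comp_add_smul
    (hF : ∀ x, HasFDerivAt F (InnerProductSpace.toDualMap ℝ E (F' x)) x) (x v : E) (s : ℝ) :
    HasDerivAt (fun s : ℝ => F (x + s • v)) (inner ℝ (F' (x + s • v)) v) s := by
  have hline : HasDerivAt (fun s : ℝ => x + s • v) v s := by
    simpa using ((hasDerivAt_id s).smul_const v).const_add x
  have := (hF (x + s • v)).comp_hasDerivAt s hline
  simp only [InnerProductSpace.toDualMap_apply_apply] at this
  exact this

theorem inner_gradient_add_smul_sub_le (hLip : ∀ x y, ‖F' x - F' y‖ ≤ C * ‖x - y‖)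
    (x v : E) {s : ℝ} (hs : 0 ≤ s) :
    inner ℝ (F' (x + s • v)) v - inner ℝ (F' x) v ≤ C * ‖v‖ ^ 2 * s := by
  calc inner ℝ (F' (x + s • v)) v - inner ℝ (F' x) v
      = inner ℝ (F' (x + s • v) - F' x) v := (inner_sub_left _ _ _).symm
    _ ≤ ‖F' (x + s • v) - F' x‖ * ‖v‖ := real_inner_le_norm _ _
    _ ≤ C * ‖x + s • v - x‖ * ‖v‖ := by gcongr; exact hLip _ _
    _ = C * ‖v‖ ^ 2 * s := by
      rw [add_sub_cancel_left, norm_smul, Real.norm_of_nonneg hs]; ring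

theorem le_add_inner_add_sq_of_lipschitz_gradient
    (hF : ∀ x, HasFDerivAt F (InnerProductSpace.toDualMap ℝ E (F' x)) x)
    (hLip : ∀ x y, ‖F' x - F' y‖ ≤ C * ‖x - y‖) (x v : E) :
    F (x + v) ≤ F x + inner ℝ (F' x) v + C / 2 * ‖v‖ ^ 2 := by
  set B : ℝ → ℝ := fun s => F x + s * inner ℝ (F' x) v + C / 2 * ‖v‖ ^ 2 * s ^ 2
  have hB (s : ℝ) : HasDerivAt B (inner ℝ (F' x) v + C * ‖v‖ ^ 2 * s) s :=
    ((((hasDerivAt_id' s).mul_const (inner ℝ (F' x) v)).const_add (F x)).add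
      ((hasDerivAt_pow 2 s).const_mul (C / 2 * ‖v‖ ^ 2))).congr_deriv (by push_cast; ring)
  have hf := hasDerivAt_comp_add_smul hF x v
  have hcompare := image_le_of_deriv_right_le_deriv_boundary
    (fun s _ => (hf s).continuousAt.continuousWithinAt) (fun s _ => (hf s).hasDerivWithinAt)
    (by simp [B]) (fun s _ => (hB s).continuousAt.continuousWithinAt)
    (fun s _ => (hB s).hasDerivWithinAt)
    (fun s hs => by linarith [inner_gradient_add_smul_sub_le hLip x v hs.1])
    (Set.right_mem_Icc.2 zero_le_one)
  simpa [B] using hcompare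

theorem mul_norm_gradient_sq_le_sub_gradient_step
    (hF : ∀ x, HasFDerivAt F (InnerProductSpace.toDualMap ℝ E (F' x)) x) (hC : 0 ≤ C)
    (hLip : ∀ x y, ‖F' x - F' y‖ ≤ C * ‖x - y‖) {G G' a : ℝ} (ha : 0 ≤ a) (x g : E)
    (hg : ‖g‖ ≤ G) (hgrad : ‖F' x‖ ≤ G') :
    a * ‖F' x‖ ^ 2 ≤
      F x - F (x - a • g) + G' * (a * ‖g - F' x‖) + C * G ^ 2 / 2 * a ^ 2 := by
  have hdesc := le_add_inner_add_sq_of_lipschitz_gradient hF hLip x (-(a • g))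
  rw [← sub_eq_add_neg, inner_neg_right, real_inner_smul_right, norm_neg, norm_smul,
    Real.norm_of_nonneg ha] at hdesc
  have hsplit : inner ℝ (F' x) g = ‖F' x‖ ^ 2 + inner ℝ (F' x) (g - F' x) := by
    rw [inner_sub_right, real_inner_self_eq_norm_sq]; ring
  have herror : -inner ℝ (F' x) (g - F' x) ≤ G' * ‖g - F' x‖ :=
    calc -inner ℝ (F' x) (g - F' x) ≤ ‖F' x‖ * ‖g - F' x‖ :=
          (neg_le_abs _).trans (abs_real_inner_le_norm _ _)
      _ ≤ G' * ‖g - F' x‖ := by gcongr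
  have hcurv : C / 2 * (a * ‖g‖) ^ 2 ≤ C * G ^ 2 / 2 * a ^ 2 := by
    calc C / 2 * (a * ‖g‖) ^ 2 = C / 2 * a ^ 2 * ‖g‖ ^ 2 := by ring
      _ ≤ C / 2 * a ^ 2 * G ^ 2 := by gcongr
      _ = C * G ^ 2 / 2 * a ^ 2 := by ring
  nlinarith [mul_le_mul_of_nonneg_left herror ha]

end LipschitzGradient

theorem inexact_gradient_descent_accumulation_general
    {E : Type*} [NormedAddCommGroup E] [InnerProductSpace ℝ E]
    (F : E → ℝ) (F' : E → E) (hF : ∀ x, HasFDerivAt F (InnerProductSpace.toDualMap ℝ E (F' x)) x)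
    (C : ℝ) (hC : 0 ≤ C) (hLip : ∀ x y, ‖F' x - F' y‖ ≤ C * ‖x - y‖)
    (G G' : ℝ)
    (α : ℕ → ℝ) (hα : ∀ t, 0 < α t)
    (g : ℕ → E) (hg : ∀ t, ‖g t‖ ≤ G)
    (θ : ℕ → E) (hθ : ∀ t, θ (t + 1) = θ t - α t • g t)
    (hgrad : ∀ t, ‖F' (θ t)‖ ≤ G') :
    ∀ T : ℕ, 1 ≤ T →
      ∑ t ∈ Finset.range T, α t * ‖F' (θ t)‖ ^ 2 ≤
        F (θ 0) - F (θ T) + G' * ∑ t ∈ Finset.range T, α t * ‖g t - F' (θ t)‖ +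
          (C * G ^ 2 / 2) * ∑ t ∈ Finset.range T, (α t) ^ 2 := by
  intro T _
  have step : ∀ t, α t * ‖F' (θ t)‖ ^ 2 ≤
      F (θ t) - F (θ (t + 1)) + G' * (α t * ‖g t - F' (θ t)‖) + C * G ^ 2 / 2 * α t ^ 2 :=
    fun t => hθ t ▸ mul_norm_gradient_sq_le_sub_gradient_step hF hC hLip (hα t).le (θ t) (g t)
      (hg t) (hgrad t)
  calc ∑ t ∈ range T, α t * ‖F' (θ t)‖ ^ 2
      ≤ ∑ t ∈ range T, (F (θ t) - F (θ (t + 1)) + G' * (α t * ‖g t - F' (θ t)‖)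
          + C * G ^ 2 / 2 * α t ^ 2) := sum_le_sum fun t _ => step t
    _ = F (θ 0) - F (θ T) + G' * ∑ t ∈ range T, α t * ‖g t - F' (θ t)‖ +
          C * G ^ 2 / 2 * ∑ t ∈ range T, α t ^ 2 := by
      rw [sum_add_distrib, sum_add_distrib, ← mul_sum, ← mul_sum, sum_range_sub' (fun t => F (θ t))]

/-- Deterministic inexact-gradient-descent accumulation inequality (backbone of
Lemma 3): with `θ_{t+1} = θ_t − α_t g_t`, gradients bounded by `G'`, update vectors
bounded by `G`, and `C`-Lipschitz gradient `∇F`,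
`Σ_{t<T} α_t ‖∇F(θ_t)‖² ≤ F(θ₀) − F(θ_T) + G' Σ_{t<T} α_t ‖g_t − ∇F(θ_t)‖
  + (C G²/2) Σ_{t<T} α_t²`. -/
theorem inexact_gradient_descent_accumulation
    {E : Type*} [NormedAddCommGroup E] [InnerProductSpace ℝ E]
    (F : E → ℝ) (F' : E → E) (hF : ∀ x, HasFDerivAt F (InnerProductSpace.toDualMap ℝ E (F' x)) x)
    (C : ℝ) (hC : 0 ≤ C) (hLip : ∀ x y, ‖F' x - F' y‖ ≤ C * ‖x - y‖)
    (G G' : ℝ) (hG : 0 ≤ G) (hG' : 0 ≤ G')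
    (α : ℕ → ℝ) (hα : ∀ t, 0 < α t)
    (g : ℕ → E) (hg : ∀ t, ‖g t‖ ≤ G)
    (θ : ℕ → E) (hθ : ∀ t, θ (t + 1) = θ t - α t • g t)
    (hgrad : ∀ t, ‖F' (θ t)‖ ≤ G') :
    ∀ T : ℕ, 1 ≤ T →
      ∑ t ∈ Finset.range T, α t * ‖F' (θ t)‖ ^ 2 ≤
        F (θ 0) - F (θ T) + G' * ∑ t ∈ Finset.range T, α t * ‖g t - F' (θ t)‖ +
          (C * G ^ 2 / 2) * ∑ t ∈ Finset.range T, (α t) ^ 2 :=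
  inexact_gradient_descent_accumulation_general F F' hF C hC hLip G G' α hα g hg θ hθ hgrad
end

section
/- Let E be a real inner product space, λ > 0, and let F : E → ℝ be differentiable and λ-strongly convex (i.e., x ↦ F(x) − (λ/2)‖x‖² is convex), with a global minimizer θ* ∈ E. Let G ≥ 0 and D ≥ 0, let (g_t)_{t≥0} be vectors in E with ‖g_t‖ ≤ G for all t, and define θ_{t+1} = θ_t − (1/(λ(t+1))) g_t starting from θ₀ ∈ E. If ‖θ_t − θ*‖ ≤ D for all t, then for every T ≥ 1: Σ_{t=0}^{T−1} ( F(θ_t) − F(θ*) ) ≤ (G²/(2λ)) (log T + 1) + D Σ_{t=0}^{T−1} ‖g_t − ∇F(θ_t)‖. -/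
/-!
Strong convexity bounds the regret `F(θ_t) − F(θ*)` of each round by
`⟪∇F(θ_t), θ_t − θ*⟫ − (λ/2)‖θ_t − θ*‖²`. Replacing `∇F(θ_t)` by the step direction `g_t` costs
at most `D‖g_t − ∇F(θ_t)‖`, and expanding `‖θ_{t+1} − θ*‖²` bounds `⟪g_t, θ_t − θ*⟫`. For the
step size `1/(λ(t+1))` the distance terms then telescope, to `−(λT/2)‖θ_T − θ*‖² ≤ 0`, and what
remains is the harmonic sum `(G²/(2λ)) Σ_{t<T} 1/(t+1) ≤ (G²/(2λ))(log T + 1)`.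
-/

open Finset Set
open scoped RealInnerProductSpace

theorem ConvexOn.add_apply_sub_le_of_hasFDerivAt {E : Type*} [NormedAddCommGroup E]
    [NormedSpace ℝ E] {s : Set E} {f : E → ℝ} {f' : E →L[ℝ] ℝ} {x y : E}
    (hf : ConvexOn ℝ s f) (hx : x ∈ s) (hy : y ∈ s) (hfx : HasFDerivAt f f' x) :
    f x + f' (y - x) ≤ f y := by
  set ℓ : ℝ →ᵃ[ℝ] E := AffineMap.lineMap x y
  have hline : ConvexOn ℝ (ℓ ⁻¹' s) (f ∘ ℓ) := hf.comp_affineMap ℓ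
  have hderiv : HasDerivAt (f ∘ ℓ) (f' (y - x)) 0 :=
    hfx.comp_hasDerivAt_of_eq 0 AffineMap.hasDerivAt_lineMap (by simp [ℓ])
  have hℓ0 : ℓ 0 = x := AffineMap.lineMap_apply_zero x y
  have hℓ1 : ℓ 1 = y := AffineMap.lineMap_apply_one x y
  have hslope := hline.le_slope_of_hasDerivAt (by simpa [hℓ0] using hx)
    (by simpa [hℓ1] using hy) zero_lt_one hderiv
  simp only [slope_def_field, Function.comp_apply, hℓ0, hℓ1, sub_zero, div_one] at hslope
  linarith

section InnerProductSpace

variable {E : Type*} [NormedAddCommGroup E] [InnerProductSpace ℝ E]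

theorem norm_sub_smul_sub_sq (x z g : E) (α : ℝ) :
    ‖x - α • g - z‖ ^ 2 = ‖x - z‖ ^ 2 - 2 * α * ⟪g, x - z⟫ + α ^ 2 * ‖g‖ ^ 2 := by
  rw [sub_right_comm, norm_sub_sq_real, real_inner_smul_right, norm_smul, mul_pow,
    Real.norm_eq_abs, sq_abs, real_inner_comm]
  ring

variable {s : Set E} {m : ℝ} {f : E → ℝ} {f' x z : E}

theorem StrongConvexOn.add_inner_add_le {y : E}
    (hf : StrongConvexOn s m f) (hx : x ∈ s) (hy : y ∈ s)
    (hfx : HasFDerivAt f (InnerProductSpace.toDualMap ℝ E f') x) :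
    f x + ⟪f', y - x⟫ + m / 2 * ‖y - x‖ ^ 2 ≤ f y := by
  have hconv := (strongConvexOn_iff_convex.mp hf).add_apply_sub_le_of_hasFDerivAt hx hy
    (hfx.sub ((hasStrictFDerivAt_norm_sq x).hasFDerivAt.const_mul (m / 2)))
  have hexpand : ‖y‖ ^ 2 = ‖x‖ ^ 2 + 2 * ⟪x, y - x⟫ + ‖y - x‖ ^ 2 := by
    simpa using norm_add_sq_real x (y - x)
  simp only [sub_apply, smul_apply, innerSL_apply_apply,
    InnerProductSpace.toDualMap_apply_apply, smul_eq_mul, nsmul_eq_mul, Nat.cast_ofNat] at hconv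
  rw [hexpand] at hconv
  linarith

theorem StrongConvexOn.sub_le_of_gradient_step {α : ℝ} (hf : StrongConvexOn s m f)
    (hx : x ∈ s) (hz : z ∈ s) (hfx : HasFDerivAt f (InnerProductSpace.toDualMap ℝ E f') x)
    (hα : α ≠ 0) (g : E) :
    f x - f z ≤ (α⁻¹ - m) / 2 * ‖x - z‖ ^ 2 - α⁻¹ / 2 * ‖x - α • g - z‖ ^ 2
      + α / 2 * ‖g‖ ^ 2 + ‖g - f'‖ * ‖x - z‖ := by
  have hlower := hf.add_inner_add_le hx hz hfx
  rw [norm_sub_rev z x, ← neg_sub x z, inner_neg_right] at hlower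
  have herr : ⟪f' - g, x - z⟫ ≤ ‖g - f'‖ * ‖x - z‖ :=
    norm_sub_rev g f' ▸ real_inner_le_norm _ _
  rw [inner_sub_left] at herr
  have hdist : α⁻¹ / 2 * ‖x - α • g - z‖ ^ 2
      = α⁻¹ / 2 * ‖x - z‖ ^ 2 - ⟪g, x - z⟫ + α / 2 * ‖g‖ ^ 2 := by
    rw [norm_sub_smul_sub_sq]
    field_simp
  linarith

theorem StrongConvexOn.sub_le_of_harmonic_step (hm : 0 < m) (hf : StrongConvexOn s m f)
    (hx : x ∈ s) (hz : z ∈ s) (hfx : HasFDerivAt f (InnerProductSpace.toDualMap ℝ E f') x)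
    {g : E} {G D : ℝ} (hg : ‖g‖ ≤ G) (hxz : ‖x - z‖ ≤ D) (t : ℕ) :
    f x - f z ≤ m * t / 2 * ‖x - z‖ ^ 2
      - m * (t + 1) / 2 * ‖x - (1 / (m * (t + 1))) • g - z‖ ^ 2
      + (G ^ 2 / (2 * m) * ((t : ℝ) + 1)⁻¹ + D * ‖g - f'‖) := by
  have hα : 1 / (m * (t + 1)) ≠ 0 := by positivity
  have hstep := hf.sub_le_of_gradient_step hx hz hfx hα g
  have hG : 1 / (m * (t + 1)) / 2 * ‖g‖ ^ 2 ≤ G ^ 2 / (2 * m) * ((t : ℝ) + 1)⁻¹ := by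
    calc _ ≤ 1 / (m * (t + 1)) / 2 * G ^ 2 := by gcongr
      _ = _ := by field_simp
  have hD : ‖g - f'‖ * ‖x - z‖ ≤ D * ‖g - f'‖ := by
    rw [mul_comm]
    gcongr
  simp only [one_div, inv_inv] at hstep hG ⊢
  linarith

end InnerProductSpace

theorem sum_range_le_of_le_sub_add {α : Type*} [AddCommGroup α] [PartialOrder α]
    [IsOrderedAddMonoid α] {a b c : ℕ → α} (h : ∀ t, a t ≤ b t - b (t + 1) + c t) (T : ℕ) :
    ∑ t ∈ range T, a t ≤ b 0 - b T + ∑ t ∈ range T, c t :=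
  calc ∑ t ∈ range T, a t ≤ ∑ t ∈ range T, (b t - b (t + 1) + c t) := sum_le_sum fun t _ ↦ h t
    _ = b 0 - b T + ∑ t ∈ range T, c t := by rw [sum_add_distrib, sum_range_sub']

theorem sum_range_inv_succ_le_log_add_one (T : ℕ) :
    ∑ t ∈ range T, ((t : ℝ) + 1)⁻¹ ≤ Real.log T + 1 := by
  have h := harmonic_le_one_add_log T
  push_cast [harmonic] at h
  linarith

theorem inexact_ogd_strongly_convex_log_regret_general
    {E : Type*} [NormedAddCommGroup E] [InnerProductSpace ℝ E]
    (lam : ℝ) (hlam : 0 < lam)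
    (F : E → ℝ) (F' : E → E) (hF : ∀ x, HasFDerivAt F (InnerProductSpace.toDualMap ℝ E (F' x)) x)
    (hconv : ConvexOn ℝ Set.univ (fun x => F x - lam / 2 * ‖x‖ ^ 2))
    (θstar : E)
    (G D : ℝ)
    (g : ℕ → E) (hg : ∀ t, ‖g t‖ ≤ G)
    (θ : ℕ → E) (hθ : ∀ t : ℕ, θ (t + 1) = θ t - (1 / (lam * (t + 1))) • g t)
    (hdist : ∀ t, ‖θ t - θstar‖ ≤ D) :
    ∀ T : ℕ, 1 ≤ T →
      ∑ t ∈ Finset.range T, (F (θ t) - F θstar) ≤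
        (G ^ 2 / (2 * lam)) * (Real.log T + 1) +
          D * ∑ t ∈ Finset.range T, ‖g t - F' (θ t)‖ := by
  intro T _
  have hsc : StrongConvexOn univ lam F := strongConvexOn_iff_convex.mpr hconv
  set b : ℕ → ℝ := fun t ↦ lam * t / 2 * ‖θ t - θstar‖ ^ 2
  have hstep (t : ℕ) : F (θ t) - F θstar ≤
      b t - b (t + 1) + (G ^ 2 / (2 * lam) * ((t : ℝ) + 1)⁻¹ + D * ‖g t - F' (θ t)‖) := by
    simpa [b, hθ t] using
      hsc.sub_le_of_harmonic_step hlam (mem_univ _) (mem_univ _) (hF (θ t)) (hg t) (hdist t) t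
  have hsum := sum_range_le_of_le_sub_add hstep T
  rw [sum_add_distrib, ← mul_sum, ← mul_sum] at hsum
  have hlog : G ^ 2 / (2 * lam) * ∑ t ∈ range T, ((t : ℝ) + 1)⁻¹ ≤
      G ^ 2 / (2 * lam) * (Real.log T + 1) := by
    gcongr
    exact sum_range_inv_succ_le_log_add_one T
  have hb0 : b 0 = 0 := by simp [b]
  have hbT : 0 ≤ b T := by positivity
  linarith

/-- Abstract core of Theorem 2 (logarithmic regret of inexact online gradient descent
on a strongly convex objective): with `F` λ-strongly convex, global minimizer `θ*`,
updates `θ_{t+1} = θ_t − (1/(λ(t+1))) g_t`, `‖g_t‖ ≤ G` and `‖θ_t − θ*‖ ≤ D`,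
`Σ_{t<T} (F(θ_t) − F(θ*)) ≤ (G²/(2λ))(log T + 1) + D Σ_{t<T} ‖g_t − ∇F(θ_t)‖`. -/
theorem inexact_ogd_strongly_convex_log_regret
    {E : Type*} [NormedAddCommGroup E] [InnerProductSpace ℝ E]
    (lam : ℝ) (hlam : 0 < lam)
    (F : E → ℝ) (F' : E → E) (hF : ∀ x, HasFDerivAt F (InnerProductSpace.toDualMap ℝ E (F' x)) x)
    (hconv : ConvexOn ℝ Set.univ (fun x => F x - lam / 2 * ‖x‖ ^ 2))
    (θstar : E) (hmin : ∀ x, F θstar ≤ F x)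
    (G D : ℝ) (hG : 0 ≤ G) (hD : 0 ≤ D)
    (g : ℕ → E) (hg : ∀ t, ‖g t‖ ≤ G)
    (θ : ℕ → E) (hθ : ∀ t : ℕ, θ (t + 1) = θ t - (1 / (lam * (t + 1))) • g t)
    (hdist : ∀ t, ‖θ t - θstar‖ ≤ D) :
    ∀ T : ℕ, 1 ≤ T →
      ∑ t ∈ Finset.range T, (F (θ t) - F θstar) ≤
        (G ^ 2 / (2 * lam)) * (Real.log T + 1) +
          D * ∑ t ∈ Finset.range T, ‖g t - F' (θ t)‖ :=
  inexact_ogd_strongly_convex_log_regret_general lam hlam F F' hF hconv θstar G D g hg θ hθ hdist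
end

section
/- Let E be a finite-dimensional real inner product space, c > 0, let G : E → ℝ be twice continuously differentiable, and let φ : E → E be differentiable and satisfy ∇G(φ(x)) + c (φ(x) − x) = 0 for every x ∈ E. Then for every x ∈ E, (id + c⁻¹ ∇²G(φ(x))) ∘ Dφ(x) = id, where ∇²G(y) denotes the derivative of the gradient map ∇G at y (a continuous linear map E → E) and Dφ(x) the derivative of φ at x. Moreover, if T := id + c⁻¹ ∇²G(φ(x)) is invertible, then Dφ(x) = T⁻¹, and for every function H : E → ℝ differentiable at φ(x), the gradient of H ∘ φ at x equals T⁻¹ (∇H(φ(x))). -/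
/-! Differentiating `∇G (φ y) = c • (y - φ y)` gives `∇²G (φ x) ∘ Dφ x = c • (id - Dφ x)`, that is
`T ∘ Dφ x = id`, so `Dφ x` is the inverse of `T`. The chain rule for gradients gives
`∇(H ∘ φ) x = (Dφ x)† (∇H (φ x))`, and `(Dφ x)† = (T⁻¹)† = T⁻¹` because `T` is self-adjoint:
the Hessian of a `C²` function is symmetric. -/

open ContinuousLinearMap InnerProductSpace
open scoped RealInnerProductSpace

theorem IsSelfAdjoint.of_mul_eq_one {R : Type*} [Monoid R] [StarMul R] {a b : R}
    (ha : IsSelfAdjoint a) (h : a * b = 1) : IsSelfAdjoint b :=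
  left_inv_eq_right_inv (by simpa [ha.star_eq] using congrArg star h) h

theorem id_add_inv_smul_fderiv_comp_fderiv_eq_id {𝕜 E : Type*} [NontriviallyNormedField 𝕜]
    [NormedAddCommGroup E] [NormedSpace 𝕜 E] {f φ : E → E} {c : 𝕜} {x : E} (hc : c ≠ 0)
    (hf : DifferentiableAt 𝕜 f (φ x)) (hφ : DifferentiableAt 𝕜 φ x)
    (hopt : ∀ y, f (φ y) + c • (φ y - y) = 0) :
    (ContinuousLinearMap.id 𝕜 E + c⁻¹ • fderiv 𝕜 f (φ x)).comp (fderiv 𝕜 φ x) =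
      ContinuousLinearMap.id 𝕜 E := by
  have hfφ : f ∘ φ = fun y => c • (y - φ y) := by
    funext y
    rw [Function.comp_apply, eq_neg_of_add_eq_zero_left (hopt y), ← smul_neg, neg_sub]
  have hchain : (fderiv 𝕜 f (φ x)).comp (fderiv 𝕜 φ x) =
      c • (ContinuousLinearMap.id 𝕜 E - fderiv 𝕜 φ x) := by
    rw [← fderiv_comp x hf hφ, hfφ]
    exact (((hasFDerivAt_id x).sub hφ.hasFDerivAt).const_smul c).fderiv
  rw [add_comp, id_comp, smul_comp, hchain, smul_smul, inv_mul_cancel₀ hc, one_smul]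
  abel

section Real

variable {E F : Type*} [NormedAddCommGroup E] [InnerProductSpace ℝ E] [CompleteSpace E]
  [NormedAddCommGroup F] [InnerProductSpace ℝ F] [CompleteSpace F]

theorem HasGradientAt.comp_hasFDerivAt {H : E → ℝ} {g : E} {φ : F → E} {L : F →L[ℝ] E}
    {x : F} (hH : HasGradientAt H g (φ x)) (hφ : HasFDerivAt φ L x) :
    HasGradientAt (H ∘ φ) (adjoint L g) x := by
  have hdual : toDual ℝ F (adjoint L g) = (toDual ℝ E g).comp L := by
    ext v
    simp [adjoint_inner_left]
  rw [hasGradientAt_iff_hasFDerivAt, hdual]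
  exact (hasGradientAt_iff_hasFDerivAt.mp hH).comp x hφ

theorem gradient_comp {H : E → ℝ} {φ : F → E} {x : F} (hH : DifferentiableAt ℝ H (φ x))
    (hφ : DifferentiableAt ℝ φ x) :
    gradient (H ∘ φ) x = adjoint (fderiv ℝ φ x) (gradient H (φ x)) :=
  (hH.hasGradientAt.comp_hasFDerivAt hφ.hasFDerivAt).gradient

theorem inner_fderiv_gradient_apply {G : E → ℝ} (y u v : E) :
    ⟪fderiv ℝ (gradient G) y u, v⟫ = fderiv ℝ (fderiv ℝ G) y u v := by
  rw [show gradient G = (toDual ℝ E).symm ∘ fderiv ℝ G from rfl,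
    LinearIsometryEquiv.comp_fderiv]
  exact toDual_symm_apply

theorem ContDiffAt.isSelfAdjoint_fderiv_gradient {G : E → ℝ} {y : E}
    (hG : ContDiffAt ℝ 2 G y) : IsSelfAdjoint (fderiv ℝ (gradient G) y) := by
  refine isSelfAdjoint_iff_isSymmetric.mpr fun u v => ?_
  rw [coe_coe, inner_fderiv_gradient_apply, real_inner_comm, inner_fderiv_gradient_apply]
  exact hG.isSymmSndFDerivAt (by simp) u v

theorem ContDiff.differentiable_gradient {G : E → ℝ} (hG : ContDiff ℝ 2 G) :
    Differentiable ℝ (gradient G) :=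
  (toDual ℝ E).symm.differentiable.comp
    ((hG.fderiv_right (by norm_num)).differentiable one_ne_zero)

end Real

/-- Implicit-differentiation identity behind Lemma 6 (hyper-gradient of the
meta-regularization bi-level problem): if `∇G(φ(x)) + c(φ(x) − x) = 0` for all `x`,
then `(id + c⁻¹ ∇²G(φ(x))) ∘ Dφ(x) = id`; moreover if `T = id + c⁻¹ ∇²G(φ(x))` has a
two-sided inverse `T⁻¹`, then `Dφ(x) = T⁻¹` and `∇(H ∘ φ)(x) = T⁻¹ (∇H(φ(x)))` for
every `H` differentiable at `φ(x)`. -/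
theorem implicit_differentiation_hypergradient
    {E : Type*} [NormedAddCommGroup E] [InnerProductSpace ℝ E] [FiniteDimensional ℝ E]
    (c : ℝ) (hc : 0 < c)
    (G : E → ℝ) (hG : ContDiff ℝ 2 G)
    (φ : E → E) (hφ : Differentiable ℝ φ)
    (hopt : ∀ x, gradient G (φ x) + c • (φ x - x) = 0) :
    (∀ x : E,
        (ContinuousLinearMap.id ℝ E + c⁻¹ • fderiv ℝ (gradient G) (φ x)).comp
            (fderiv ℝ φ x) =
          ContinuousLinearMap.id ℝ E) ∧
      (∀ x : E, ∀ Tinv : E →L[ℝ] E,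
        (ContinuousLinearMap.id ℝ E + c⁻¹ • fderiv ℝ (gradient G) (φ x)).comp Tinv =
            ContinuousLinearMap.id ℝ E →
        Tinv.comp (ContinuousLinearMap.id ℝ E + c⁻¹ • fderiv ℝ (gradient G) (φ x)) =
            ContinuousLinearMap.id ℝ E →
        (fderiv ℝ φ x = (Tinv : E →L[ℝ] E)) ∧
          ∀ H : E → ℝ, DifferentiableAt ℝ H (φ x) →
            gradient (H ∘ φ) x = Tinv (gradient H (φ x))) := by
  have hT_comp_fderiv x := id_add_inv_smul_fderiv_comp_fderiv_eq_id hc.ne'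
    (hG.differentiable_gradient (φ x)) (hφ x) hopt
  refine ⟨hT_comp_fderiv, fun x Tinv hT_comp_Tinv hTinv_comp_T => ?_⟩
  have hfderiv : fderiv ℝ φ x = Tinv :=
    (left_inv_eq_right_inv (M := E →L[ℝ] E) hTinv_comp_T (hT_comp_fderiv x)).symm
  have hT_selfAdjoint : IsSelfAdjoint
      (ContinuousLinearMap.id ℝ E + c⁻¹ • fderiv ℝ (gradient G) (φ x)) := by
    rw [← one_def]
    exact (IsSelfAdjoint.one _).add
      ((IsSelfAdjoint.all c⁻¹).smul hG.contDiffAt.isSelfAdjoint_fderiv_gradient)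
  refine ⟨hfderiv, fun H hH => ?_⟩
  rw [gradient_comp hH (hφ x), hfderiv, (hT_selfAdjoint.of_mul_eq_one hT_comp_Tinv).adjoint_eq]
end
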